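/- Let H have unique ground state |ψ₀⟩ with gap ≥ Δ and let f satisfy f̂(−ν) = 1 for ν ≤ 0 and f̂(−ν) = 0 for ν ≥ Δ (on Bohr frequencies). Then for any operator A: (i) Â_f |ψ₀⟩ = ⟨ψ₀|A|ψ₀⟩ · |ψ₀⟩, and (ii) ⟨ψ₀| Â_f = ⟨ψ₀| A. -/

import Mathlib

open Matrix Finset

noncomputable section

/-- The rank-one operator `|ψ i⟩⟨ψ i|`. -/
def ketbra {n : ℕ} (ψ : Fin n → Fin n → ℂ) (i : Fin n) : Matrix (Fin n) (Fin n) ℂ :=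
  Matrix.vecMulVec (ψ i) (star (ψ i))

/-- The set of Bohr frequencies `{E i - E j}` of the Hamiltonian. -/
def bohrSet {n : ℕ} (E : Fin n → ℝ) : Finset ℝ :=
  Finset.image (fun p : Fin n × Fin n => E p.1 - E p.2) Finset.univ

/-- The Bohr-frequency component `A_ν = ∑_{E i - E j = ν} |ψ i⟩⟨ψ i| A |ψ j⟩⟨ψ j|`. -/
def bohrComp {n : ℕ} (ψ : Fin n → Fin n → ℂ) (E : Fin n → ℝ)
    (A : Matrix (Fin n) (Fin n) ℂ) (ν : ℝ) : Matrix (Fin n) (Fin n) ℂ :=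
  ∑ i, ∑ j, if E i - E j = ν then ketbra ψ i * A * ketbra ψ j else 0

/-- The filtered operator `Â_f = ∑_ν f̂(−ν) A_ν`, specified via the Fourier transform `f̂`. -/
def sumFiltered {n : ℕ} (ψ : Fin n → Fin n → ℂ) (E : Fin n → ℝ)
    (A : Matrix (Fin n) (Fin n) ℂ) (fhat : ℝ → ℂ) : Matrix (Fin n) (Fin n) ℂ :=
  ∑ ν ∈ bohrSet E, fhat (-ν) • bohrComp ψ E A ν

/-!
In the eigenbasis, `Â_f = ∑ i j, f̂(-(E i - E j)) • |ψ i⟩⟨ψ i| A |ψ j⟩⟨ψ j|`. Applied to `ψ 0`,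
orthonormality keeps only `j = 0`; the frequencies `E i - E 0` vanish for `i = 0` and are `≥ Δ`
otherwise, so only `⟨ψ 0|A|ψ 0⟩ ψ 0` survives. Dually `⟨ψ 0| Â_f` keeps only `i = 0`, where all
frequencies `E 0 - E j` are `≤ 0`, so `f̂ = 1` and completeness of the `ψ j` gives back `⟨ψ 0| A`.
-/

lemma sub_mem_bohrSet {n : ℕ} (E : Fin n → ℝ) (i j : Fin n) : E i - E j ∈ bohrSet E :=
  Finset.mem_image_of_mem _ (Finset.mem_univ (i, j))

section
variable {n : ℕ} {ψ : Fin n → Fin n → ℂ} {E : Fin n → ℝ} {A : Matrix (Fin n) (Fin n) ℂ}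
  {fhat : ℝ → ℂ}

lemma ketbra_mulVec (i : Fin n) (x : Fin n → ℂ) :
    ketbra ψ i *ᵥ x = (star (ψ i) ⬝ᵥ x) • ψ i := by
  rw [ketbra, vecMulVec_mulVec, op_smul_eq_smul]

lemma vecMul_ketbra (i : Fin n) (y : Fin n → ℂ) :
    y ᵥ* ketbra ψ i = (y ⬝ᵥ ψ i) • star (ψ i) :=
  vecMul_vecMulVec _ _ _

lemma sumFiltered_eq_sum_ketbra :
    sumFiltered ψ E A fhat
      = ∑ i, ∑ j, fhat (-(E i - E j)) • (ketbra ψ i * A * ketbra ψ j) := by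
  simp only [sumFiltered, bohrComp, Finset.smul_sum, smul_ite, smul_zero]
  rw [Finset.sum_comm]
  refine Finset.sum_congr rfl fun i _ => ?_
  rw [Finset.sum_comm]
  refine Finset.sum_congr rfl fun j _ => ?_
  rw [Finset.sum_ite_eq, if_pos (sub_mem_bohrSet E i j)]

lemma ketbra_mulVec_of_orthonormal
    (horth : ∀ i j, star (ψ i) ⬝ᵥ ψ j = if i = j then (1 : ℂ) else 0) (j k : Fin n) :
    ketbra ψ j *ᵥ ψ k = if j = k then ψ k else 0 := by
  rw [ketbra_mulVec, horth]
  split_ifs with h <;> simp [h]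

lemma vecMul_ketbra_of_orthonormal
    (horth : ∀ i j, star (ψ i) ⬝ᵥ ψ j = if i = j then (1 : ℂ) else 0) (k i : Fin n) :
    star (ψ k) ᵥ* ketbra ψ i = if k = i then star (ψ k) else 0 := by
  rw [vecMul_ketbra, horth]
  split_ifs with h <;> simp [h]

lemma sumFiltered_mulVec
    (horth : ∀ i j, star (ψ i) ⬝ᵥ ψ j = if i = j then (1 : ℂ) else 0) (k : Fin n) :
    sumFiltered ψ E A fhat *ᵥ ψ k
      = ∑ i, (fhat (-(E i - E k)) * (star (ψ i) ⬝ᵥ A *ᵥ ψ k)) • ψ i := by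
  rw [sumFiltered_eq_sum_ketbra, sum_mulVec]
  refine Finset.sum_congr rfl fun i _ => ?_
  rw [sum_mulVec, Finset.sum_eq_single_of_mem k (mem_univ k) fun j _ hj => ?_]
  · rw [smul_mulVec, ← mulVec_mulVec, ← mulVec_mulVec, ketbra_mulVec_of_orthonormal horth,
      if_pos rfl, ketbra_mulVec, smul_smul]
  · rw [smul_mulVec, ← mulVec_mulVec, ketbra_mulVec_of_orthonormal horth, if_neg hj,
      mulVec_zero, smul_zero]

lemma vecMul_sumFiltered
    (horth : ∀ i j, star (ψ i) ⬝ᵥ ψ j = if i = j then (1 : ℂ) else 0) (k : Fin n) :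
    star (ψ k) ᵥ* sumFiltered ψ E A fhat
      = ∑ j, fhat (-(E k - E j)) • (star (ψ k) ᵥ* (A * ketbra ψ j)) := by
  rw [sumFiltered_eq_sum_ketbra, vecMul_sum,
    Finset.sum_eq_single_of_mem k (mem_univ k) fun i _ hi => ?_]
  · rw [vecMul_sum]
    refine Finset.sum_congr rfl fun j _ => ?_
    rw [vecMul_smul, Matrix.mul_assoc, ← vecMul_vecMul, vecMul_ketbra_of_orthonormal horth,
      if_pos rfl]
  · rw [vecMul_sum]
    refine Finset.sum_eq_zero fun j _ => ?_
    rw [vecMul_smul, Matrix.mul_assoc, ← vecMul_vecMul, vecMul_ketbra_of_orthonormal horth,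
      if_neg (Ne.symm hi), zero_vecMul, smul_zero]

lemma sumFiltered_mulVec_eq_smul
    (horth : ∀ i j, star (ψ i) ⬝ᵥ ψ j = if i = j then (1 : ℂ) else 0) (k : Fin n)
    (hf : ∀ i, fhat (-(E i - E k)) = if i = k then 1 else 0) :
    sumFiltered ψ E A fhat *ᵥ ψ k = (star (ψ k) ⬝ᵥ A *ᵥ ψ k) • ψ k := by
  simp only [sumFiltered_mulVec horth, hf, ite_mul, one_mul, zero_mul, ite_smul,
    zero_smul, Finset.sum_ite_eq', mem_univ, if_true]

lemma vecMul_sumFiltered_eq_vecMul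
    (horth : ∀ i j, star (ψ i) ⬝ᵥ ψ j = if i = j then (1 : ℂ) else 0)
    (hcomplete : ∑ i, ketbra ψ i = 1) (k : Fin n) (hf : ∀ j, fhat (-(E k - E j)) = 1) :
    star (ψ k) ᵥ* sumFiltered ψ E A fhat = star (ψ k) ᵥ* A := by
  simp only [vecMul_sumFiltered horth, hf, one_smul]
  rw [← vecMul_sum, ← Finset.mul_sum, hcomplete, Matrix.mul_one]

end

theorem filter_fixes_ground_state_general {d : ℕ} (ψ : Fin (d + 1) → Fin (d + 1) → ℂ)
    (E : Fin (d + 1) → ℝ) (A : Matrix (Fin (d + 1)) (Fin (d + 1)) ℂ) (Δ : ℝ)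
    (fhat : ℝ → ℂ)
    (horth : ∀ i j, star (ψ i) ⬝ᵥ ψ j = if i = j then (1 : ℂ) else 0)
    (hcomplete : ∑ i, ketbra ψ i = 1)
    (hgap : ∀ i : Fin (d + 1), i ≠ 0 → E 0 + Δ ≤ E i)
    (hΔ : 0 < Δ)
    (hfhi : ∀ ν ∈ bohrSet E, Δ ≤ ν → fhat (-ν) = 0)
    (hflo : ∀ ν ∈ bohrSet E, ν ≤ 0 → fhat (-ν) = 1) :
    (sumFiltered ψ E A fhat).mulVec (ψ 0)
        = (star (ψ 0) ⬝ᵥ A.mulVec (ψ 0)) • ψ 0 ∧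
      Matrix.vecMul (star (ψ 0)) (sumFiltered ψ E A fhat)
        = Matrix.vecMul (star (ψ 0)) A := by
  have hground (j : Fin (d + 1)) : E 0 - E j ≤ 0 := by
    rcases eq_or_ne j 0 with rfl | hj
    · exact (sub_self _).le
    · linarith [hgap j hj]
  refine ⟨sumFiltered_mulVec_eq_smul horth 0 fun i => ?_,
    vecMul_sumFiltered_eq_vecMul horth hcomplete 0 fun j =>
      hflo _ (sub_mem_bohrSet E 0 j) (hground j)⟩
  split_ifs with hi
  · subst hi
    exact hflo _ (sub_mem_bohrSet E 0 0) (hground 0)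
  · exact hfhi _ (sub_mem_bohrSet E i 0) (by linarith [hgap i hi])

/-- with `f̂(−ν) = 1` for `ν ≤ 0` and `f̂(−ν) = 0` for `ν ≥ Δ` (on Bohr
frequencies), (i) `Â_f |ψ₀⟩ = ⟨ψ₀|A|ψ₀⟩ |ψ₀⟩` and (ii) `⟨ψ₀| Â_f = ⟨ψ₀| A`. -/
theorem filter_fixes_ground_state {d : ℕ} (ψ : Fin (d + 1) → Fin (d + 1) → ℂ)
    (E : Fin (d + 1) → ℝ) (H A : Matrix (Fin (d + 1)) (Fin (d + 1)) ℂ) (Δ : ℝ)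
    (fhat : ℝ → ℂ)
    (horth : ∀ i j, star (ψ i) ⬝ᵥ ψ j = if i = j then (1 : ℂ) else 0)
    (hcomplete : ∑ i, ketbra ψ i = 1)
    (hH : H = ∑ i, (E i : ℂ) • ketbra ψ i)
    (hgap : ∀ i : Fin (d + 1), i ≠ 0 → E 0 + Δ ≤ E i)
    (hΔ : 0 < Δ)
    (hfhi : ∀ ν ∈ bohrSet E, Δ ≤ ν → fhat (-ν) = 0)
    (hflo : ∀ ν ∈ bohrSet E, ν ≤ 0 → fhat (-ν) = 1) :
    (sumFiltered ψ E A fhat).mulVec (ψ 0)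
        = (star (ψ 0) ⬝ᵥ A.mulVec (ψ 0)) • ψ 0 ∧
      Matrix.vecMul (star (ψ 0)) (sumFiltered ψ E A fhat)
        = Matrix.vecMul (star (ψ 0)) A :=
  filter_fixes_ground_state_general ψ E A Δ fhat horth hcomplete hgap hΔ hfhi hflo

end
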